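/- For each n, let c^{(n)} be the sequence with c^{(n)}_k = 0 for k < n and c^{(n)}_k = (1/r)(−s/r)^{k−n} f_{k+1}²/(f_n f_{n+1}) for k ≥ n. Then F̂(r,s)(c^{(n)}) = e^{(n)} (the n-th standard unit sequence), and the family (c^{(n)})_{n≥0} is a Schauder basis of ℓ_p(F̂(r,s)) for 1 ≤ p < ∞: every x ∈ ℓ_p(F̂(r,s)) has the unique norm-convergent representation x = ∑_n (F̂(r,s)x)_n c^{(n)}. -/

import Mathlib

open scoped BigOperators
open Filter

noncomputable def fibs (n : ℕ) : ℝ := (Nat.fib (n + 1) : ℝ)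

noncomputable def Fhat (r s : ℝ) (x : ℕ → ℝ) : ℕ → ℝ
  | 0 => r * x 0
  | n + 1 => r * (fibs (n + 1) / fibs (n + 2)) * x (n + 1)
      + s * (fibs (n + 2) / fibs (n + 1)) * x n

noncomputable def cseq (r s : ℝ) (n : ℕ) : ℕ → ℝ := fun k =>
  if k < n then 0 else (1 / r) * (-s / r) ^ (k - n) * (fibs (k + 1) ^ 2 / (fibs n * fibs (n + 1)))

/-!
`F̂(r,s)` is linear, and `c⁽ⁿ⁾` vanishes below `n`, has `F̂(r,s)`-coordinate `1` at `n`, and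
beyond `n` solves the homogeneous recurrence
`r (f_{k+1}/f_{k+2}) c_{k+1} + s (f_{k+2}/f_{k+1}) c_k = 0`, so `F̂(r,s) c⁽ⁿ⁾ = e⁽ⁿ⁾`.
Hence `F̂(r,s)(x - ∑_{n ≤ m} μ_n c⁽ⁿ⁾) = F̂(r,s)x - 1_{[0,m]} μ`, and both claims become
statements about the unit vectors of `ℓ_p`: the tails of a `p`-summable sequence tend to zero,
and every coordinate is bounded by the `ℓ_p` norm.
-/

open Topology

lemma fibs_pos (n : ℕ) : 0 < fibs n := by
  unfold fibs
  exact_mod_cast Nat.fib_pos.mpr n.succ_pos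

noncomputable def fhatLinearMap (r s : ℝ) : (ℕ → ℝ) →ₗ[ℝ] ℕ → ℝ where
  toFun := Fhat r s
  map_add' x y := by ext (_ | k) <;> simp only [Fhat, Pi.add_apply] <;> ring
  map_smul' c x := by
    ext (_ | k) <;> simp only [Fhat, Pi.smul_apply, smul_eq_mul, RingHom.id_apply] <;> ring

section Fhat

variable {r s : ℝ}

lemma cseq_of_lt {n k : ℕ} (h : k < n) : cseq r s n k = 0 := if_pos h

lemma cseq_of_le {n k : ℕ} (h : n ≤ k) :
    cseq r s n k = 1 / r * (-s / r) ^ (k - n) * (fibs (k + 1) ^ 2 / (fibs n * fibs (n + 1))) :=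
  if_neg h.not_gt

lemma Fhat_cseq_succ_of_le (hr : r ≠ 0) {n k : ℕ} (h : n ≤ k) :
    Fhat r s (cseq r s n) (k + 1) = 0 := by
  have hfibs := fibs_pos
  rw [Fhat, cseq_of_le h, cseq_of_le (h.trans k.le_succ), Nat.succ_sub h, pow_succ]
  field_simp
  ring

lemma Fhat_cseq (hr : r ≠ 0) (n : ℕ) :
    Fhat r s (cseq r s n) = fun k => if k = n then 1 else 0 := by
  ext (_ | k)
  · rcases n with _ | n
    · simp [Fhat, cseq_of_le, fibs, hr]
    · simp [Fhat, cseq_of_lt]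
  · rcases lt_trichotomy (k + 1) n with h | rfl | h
    · simp [Fhat, cseq_of_lt, h, k.lt_succ_self.trans h, h.ne]
    · simp [Fhat, cseq_of_lt k.lt_succ_self, cseq_of_le le_rfl]
      field_simp
      exact div_self (mul_pos (fibs_pos _) (fibs_pos _)).ne'
    · rw [Fhat_cseq_succ_of_le hr (Nat.lt_succ_iff.mp h), if_neg h.ne']

lemma Fhat_sub_sum_mul_cseq (hr : r ≠ 0) (x μ : ℕ → ℝ) (m k : ℕ) :
    Fhat r s (fun i => x i - ∑ n ∈ Finset.range (m + 1), μ n * cseq r s n i) k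
      = Fhat r s x k - (Set.Iic m).indicator μ k := by
  have hsum : (fun i => x i - ∑ n ∈ Finset.range (m + 1), μ n * cseq r s n i)
      = x - ∑ n ∈ Finset.range (m + 1), μ n • cseq r s n := by
    ext i
    simp [Finset.sum_apply]
  rw [hsum]
  change fhatLinearMap r s (x - ∑ n ∈ Finset.range (m + 1), μ n • cseq r s n) k = _
  rw [map_sub, map_sum]
  simp [fhatLinearMap, Fhat_cseq hr, Set.indicator_apply]

end Fhat

section RpowSummable

variable {p : ℝ}

lemma abs_le_tsum_abs_rpow_rpow_one_div {α : Type*} (hp : 0 < p) {z : α → ℝ}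
    (hz : Summable fun k => |z k| ^ p) (j : α) :
    |z j| ≤ (∑' k, |z k| ^ p) ^ (1 / p) :=
  calc |z j| = (|z j| ^ p) ^ (1 / p) := by
        rw [← Real.rpow_mul (abs_nonneg _), mul_one_div_cancel hp.ne', Real.rpow_one]
    _ ≤ (∑' k, |z k| ^ p) ^ (1 / p) := by
        gcongr
        exact hz.le_tsum j fun k _ => by positivity

lemma summable_abs_rpow_sub_indicator_Iic {y : ℕ → ℝ} (hy : Summable fun k => |y k| ^ p)
    (μ : ℕ → ℝ) (m : ℕ) : Summable fun k => |y k - (Set.Iic m).indicator μ k| ^ p :=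
  hy.congr_cofinite <| (Set.finite_Iic m).subset fun k hk => by
    contrapose! hk
    simp [Set.indicator_of_notMem hk]

lemma tendsto_tsum_abs_rpow_sub_indicator_Iic (hp : 0 < p) {y : ℕ → ℝ}
    (hy : Summable fun k => |y k| ^ p) :
    Tendsto (fun m => (∑' k, |y k - (Set.Iic m).indicator y k| ^ p) ^ (1 / p))
      atTop (𝓝 0) := by
  have tail_eq (m : ℕ) :
      ∑' k, |y k - (Set.Iic m).indicator y k| ^ p = ∑' i, |y (i + (m + 1))| ^ p := by
    rw [← (summable_abs_rpow_sub_indicator_Iic hy y m).sum_add_tsum_nat_add (m + 1),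
      Finset.sum_eq_zero fun k hk => ?_, zero_add]
    · refine tsum_congr fun i => ?_
      rw [Set.indicator_of_notMem (by simp; omega), sub_zero]
    · rw [Set.indicator_of_mem (by simpa [Nat.lt_succ_iff] using hk), sub_self, abs_zero,
        Real.zero_rpow hp.ne']
  have tail : Tendsto (fun m => ∑' i, |y (i + (m + 1))| ^ p) atTop (𝓝 0) :=
    (tendsto_sum_nat_add fun k => |y k| ^ p).comp (tendsto_add_atTop_nat 1)
  simpa only [tail_eq, Real.zero_rpow (one_div_pos.mpr hp).ne'] using
    tail.rpow_const (Or.inr (one_div_pos.mpr hp).le)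

lemma eq_of_tendsto_tsum_abs_rpow_sub_indicator_Iic (hp : 0 < p) {y μ : ℕ → ℝ}
    (hy : Summable fun k => |y k| ^ p)
    (hμ : Tendsto (fun m => (∑' k, |y k - (Set.Iic m).indicator μ k| ^ p) ^ (1 / p))
      atTop (𝓝 0)) : μ = y := by
  ext j
  have bound : ∀ᶠ m in atTop,
      |y j - μ j| ≤ (∑' k, |y k - (Set.Iic m).indicator μ k| ^ p) ^ (1 / p) := by
    filter_upwards [eventually_ge_atTop j] with m hm
    simpa [Set.indicator_of_mem (Set.mem_Iic.mpr hm)] using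
      abs_le_tsum_abs_rpow_rpow_one_div hp (summable_abs_rpow_sub_indicator_Iic hy μ m) j
  exact (sub_eq_zero.mp (abs_nonpos_iff.mp (ge_of_tendsto hμ bound))).symm

end RpowSummable

theorem schauder_basis_general (r s : ℝ) (hr : r ≠ 0) (p : ℝ) (hp : 1 ≤ p) :
    (∀ n, Fhat r s (cseq r s n) = fun k => if k = n then 1 else 0) ∧
    ∀ x : ℕ → ℝ, Summable (fun k => |Fhat r s x k| ^ p) →
      Tendsto (fun m =>
          (∑' k, |Fhat r s (fun i => x i - ∑ n ∈ Finset.range (m + 1),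
            Fhat r s x n * cseq r s n i) k| ^ p) ^ (1 / p)) atTop (nhds 0) ∧
      ∀ μ : ℕ → ℝ,
        Tendsto (fun m =>
            (∑' k, |Fhat r s (fun i => x i - ∑ n ∈ Finset.range (m + 1),
              μ n * cseq r s n i) k| ^ p) ^ (1 / p)) atTop (nhds 0) →
        μ = fun n => Fhat r s x n := by
  have hp₀ : 0 < p := one_pos.trans_le hp
  refine ⟨Fhat_cseq hr, fun x hx => ?_⟩
  simp only [Fhat_sub_sum_mul_cseq hr]
  exact ⟨tendsto_tsum_abs_rpow_sub_indicator_Iic hp₀ hx,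
    fun μ hμ => eq_of_tendsto_tsum_abs_rpow_sub_indicator_Iic hp₀ hx hμ⟩

theorem schauder_basis (r s : ℝ) (hr : r ≠ 0) (hs : s ≠ 0) (p : ℝ) (hp : 1 ≤ p) :
    (∀ n, Fhat r s (cseq r s n) = fun k => if k = n then 1 else 0) ∧
    ∀ x : ℕ → ℝ, Summable (fun k => |Fhat r s x k| ^ p) →
      Tendsto (fun m =>
          (∑' k, |Fhat r s (fun i => x i - ∑ n ∈ Finset.range (m + 1),
            Fhat r s x n * cseq r s n i) k| ^ p) ^ (1 / p)) atTop (nhds 0) ∧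
      ∀ μ : ℕ → ℝ,
        Tendsto (fun m =>
            (∑' k, |Fhat r s (fun i => x i - ∑ n ∈ Finset.range (m + 1),
              μ n * cseq r s n i) k| ^ p) ^ (1 / p)) atTop (nhds 0) →
        μ = fun n => Fhat r s x n :=
  schauder_basis_general r s hr p hp
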